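/- arXiv:2503.09528 — 5 statements merged into one kernel-verified Lean document; each statement's English description precedes it below -/
import Mathlib

section
/- For an integer $b \geq 3$, the Newhouse thickness of the set $\mathcal{C}_{b,0} := \{x \in [0,1] : x = \sum_{i<0} c_i b^i, \ c_i \in \{1,\dots,b-1\}\}$ equals $b-2$. -/
/-- Newhouse thickness of a compact set `C ⊆ ℝ`: for each bounded gap `(a,b)` of `C`,
the left piece extends from `a` leftwards to the nearest right-endpoint of a gap of
length at least `b - a` (or to `sInf C`), similarly for the right piece; the thickness
is the infimum over all gaps of `min |L| |R| / |G|`. -/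
noncomputable def thickness (C : Set ℝ) : ℝ :=
  sInf { t : ℝ | ∃ a b : ℝ, a ∈ C ∧ b ∈ C ∧ a < b ∧ Set.Ioo a b ∩ C = ∅ ∧
    t = min
      (a - sSup (insert (sInf C)
        {d : ℝ | ∃ c : ℝ, c ∈ C ∧ d ∈ C ∧ c < d ∧ d ≤ a ∧ b - a ≤ d - c ∧ Set.Ioo c d ∩ C = ∅}))
      (sInf (insert (sSup C)
        {c : ℝ | ∃ d : ℝ, c ∈ C ∧ d ∈ C ∧ c < d ∧ b ≤ c ∧ b - a ≤ d - c ∧ Set.Ioo c d ∩ C = ∅}) - b)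
      / (b - a) }


/-- The set of reals in `[0,1]` admitting a base-`b` expansion omitting the digit `0`,
i.e. `x = ∑_{i<0} cᵢ bⁱ` with all digits `cᵢ ∈ {1, …, b-1}`. -/
noncomputable def Cb0 (b : ℕ) : Set ℝ :=
  {x : ℝ | x ∈ Set.Icc (0 : ℝ) 1 ∧ ∃ c : ℕ → ℕ, (∀ i, 1 ≤ c i ∧ c i ≤ b - 1) ∧
    x = ∑' i : ℕ, (c i : ℝ) / (b : ℝ) ^ (i + 1)}

/-!
Write `m = 1/(b-1) = min C` and `f_j y = (y + j)/b` (`prependDigit b j`). Splitting off the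
first digit gives `C = ⋃_{1 ≤ j ≤ b-1} f_j C` with `f_j C ⊆ [f_j m, f_j 1]`, so every gap of `C`
is either a gap `(f_j 1, f_{j+1} m)` between consecutive copies, of length `m/b`, or the image
`f_j G` of a gap `G`; in particular no gap is longer than `m/b`. For a gap between consecutive
copies the left and right pieces are the copies `f_j C` and `f_{j+1} C` themselves, of length
`(1 - m)/b = (b - 2) m/b`, and `f_j` carries this picture to every other gap, so every gap has
ratio exactly `b - 2`.
-/

open Set

section Gaps

variable {C : Set ℝ} {a β c d p q x τ : ℝ}

def IsGap (C : Set ℝ) (a β : ℝ) : Prop :=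
  a ∈ C ∧ β ∈ C ∧ a < β ∧ Ioo a β ∩ C = ∅

def leftEnds (C : Set ℝ) (a β : ℝ) : Set ℝ :=
  {d | ∃ c, IsGap C c d ∧ d ≤ a ∧ β - a ≤ d - c}

def rightEnds (C : Set ℝ) (a β : ℝ) : Set ℝ :=
  {c | ∃ d, IsGap C c d ∧ β ≤ c ∧ β - a ≤ d - c}

noncomputable def gapRatio (C : Set ℝ) (a β : ℝ) : ℝ :=
  min (a - sSup (insert (sInf C) (leftEnds C a β)))
    (sInf (insert (sSup C) (rightEnds C a β)) - β) / (β - a)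

lemma leftEnds_eq (C : Set ℝ) (a β : ℝ) :
    leftEnds C a β =
      {d | ∃ c, c ∈ C ∧ d ∈ C ∧ c < d ∧ d ≤ a ∧ β - a ≤ d - c ∧ Ioo c d ∩ C = ∅} := by
  ext d
  constructor
  · rintro ⟨c, ⟨hc, hd, hcd, hgap⟩, hda, hlen⟩
    exact ⟨c, hc, hd, hcd, hda, hlen, hgap⟩
  · rintro ⟨c, hc, hd, hcd, hda, hlen, hgap⟩
    exact ⟨c, ⟨hc, hd, hcd, hgap⟩, hda, hlen⟩

lemma rightEnds_eq (C : Set ℝ) (a β : ℝ) :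
    rightEnds C a β =
      {c | ∃ d, c ∈ C ∧ d ∈ C ∧ c < d ∧ β ≤ c ∧ β - a ≤ d - c ∧ Ioo c d ∩ C = ∅} := by
  ext c
  constructor
  · rintro ⟨d, ⟨hc, hd, hcd, hgap⟩, hβc, hlen⟩
    exact ⟨d, hc, hd, hcd, hβc, hlen, hgap⟩
  · rintro ⟨d, hc, hd, hcd, hβc, hlen, hgap⟩
    exact ⟨d, ⟨hc, hd, hcd, hgap⟩, hβc, hlen⟩

lemma thickness_eq_sInf_gapRatio (C : Set ℝ) :
    thickness C = sInf {t | ∃ a β, IsGap C a β ∧ t = gapRatio C a β} := by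
  simp only [thickness, gapRatio, leftEnds_eq, rightEnds_eq, IsGap, and_assoc]

lemma thickness_eq_of_forall_gapRatio_eq (hne : ∃ a β, IsGap C a β)
    (h : ∀ a β, IsGap C a β → gapRatio C a β = τ) : thickness C = τ := by
  have hset : {t | ∃ a β, IsGap C a β ∧ t = gapRatio C a β} = {τ} := by
    refine eq_singleton_iff_unique_mem.mpr ⟨?_, ?_⟩
    · obtain ⟨a, β, hg⟩ := hne
      exact ⟨a, β, hg, (h a β hg).symm⟩
    · rintro t ⟨a, β, hg, rfl⟩
      exact h a β hg
  rw [thickness_eq_sInf_gapRatio, hset, csInf_singleton]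

lemma IsGap.le_or_le (h : IsGap C c d) (hx : x ∈ C) : x ≤ c ∨ d ≤ x := by
  by_contra! hcx
  exact (eq_empty_iff_forall_notMem.mp h.2.2.2) x ⟨hcx, hx⟩

def IsLeftPieceEnd (C : Set ℝ) (a β p : ℝ) : Prop :=
  p ∈ C ∧ (p = sInf C ∨ p ∈ leftEnds C a β) ∧
    ∀ c d, IsGap C c d → p ≤ c → d ≤ a → d - c < β - a

def IsRightPieceEnd (C : Set ℝ) (a β q : ℝ) : Prop :=
  q ∈ C ∧ (q = sSup C ∨ q ∈ rightEnds C a β) ∧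
    ∀ c d, IsGap C c d → β ≤ c → d ≤ q → d - c < β - a

lemma IsLeftPieceEnd.isGreatest (h : IsLeftPieceEnd C a β p) (hC : BddBelow C) :
    IsGreatest (insert (sInf C) (leftEnds C a β)) p := by
  obtain ⟨hpC, hp, hsmall⟩ := h
  refine ⟨?_, ?_⟩
  · rcases hp with rfl | hp
    exacts [mem_insert _ _, mem_insert_of_mem _ hp]
  · rintro x (rfl | ⟨c, hg, hxa, hlen⟩)
    · exact csInf_le hC hpC
    · by_contra! hpx
      have hpc : p ≤ c := (hg.le_or_le hpC).resolve_right (not_le.mpr hpx)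
      linarith [hsmall c x hg hpc hxa]

lemma IsRightPieceEnd.isLeast (h : IsRightPieceEnd C a β q) (hC : BddAbove C) :
    IsLeast (insert (sSup C) (rightEnds C a β)) q := by
  obtain ⟨hqC, hq, hsmall⟩ := h
  refine ⟨?_, ?_⟩
  · rcases hq with rfl | hq
    exacts [mem_insert _ _, mem_insert_of_mem _ hq]
  · rintro x (rfl | ⟨d, hg, hβx, hlen⟩)
    · exact le_csSup hC hqC
    · by_contra! hxq
      have hdq : d ≤ q := (hg.le_or_le hqC).resolve_left (not_le.mpr hxq)
      linarith [hsmall x d hg hβx hdq]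

lemma gapRatio_eq (hp : IsLeftPieceEnd C a β p) (hq : IsRightPieceEnd C a β q)
    (hC : BddBelow C) (hC' : BddAbove C) :
    gapRatio C a β = min (a - p) (q - β) / (β - a) := by
  rw [gapRatio, (hp.isGreatest hC).csSup_eq, (hq.isLeast hC').csInf_eq]

end Gaps

section Geometric

variable {r : ℝ}

lemma summable_div_pow_succ (hr : 1 < r) (x : ℝ) : Summable fun i : ℕ => x / r ^ (i + 1) := by
  have hr0 : r ≠ 0 := by positivity
  refine ((summable_geometric_of_lt_one (inv_pos.mpr (by linarith)).le
    (inv_lt_one_of_one_lt₀ hr)).mul_left (x / r)).congr fun i => ?_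
  rw [pow_succ, inv_pow]
  field_simp

lemma tsum_div_pow_succ (hr : 1 < r) (x : ℝ) : ∑' i : ℕ, x / r ^ (i + 1) = x / (r - 1) := by
  have hr0 : r ≠ 0 := by positivity
  have hr1 : r - 1 ≠ 0 := by linarith
  calc ∑' i : ℕ, x / r ^ (i + 1) = ∑' i : ℕ, x / r * r⁻¹ ^ i := by
        refine tsum_congr fun i => ?_
        rw [pow_succ, inv_pow]
        field_simp
    _ = x / (r - 1) := by
        rw [tsum_mul_left, tsum_geometric_of_lt_one (inv_pos.mpr (by linarith)).le
          (inv_lt_one_of_one_lt₀ hr)]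
        field_simp

end Geometric

namespace Cb0

variable {b j k : ℕ} {a β c d x y z : ℝ}

lemma summable_digits (hb : 1 < b) {c : ℕ → ℕ} (hc : ∀ i, c i ≤ b - 1) :
    Summable fun i : ℕ => (c i : ℝ) / (b : ℝ) ^ (i + 1) := by
  have hB : (1 : ℝ) < b := by exact_mod_cast hb
  refine (summable_div_pow_succ hB b).of_nonneg_of_le (fun i => by positivity) fun i => ?_
  gcongr
  exact_mod_cast (hc i).trans (Nat.sub_le b 1)

lemma tsum_digits_mem_Icc (hb : 1 < b) {c : ℕ → ℕ} (hc : ∀ i, 1 ≤ c i ∧ c i ≤ b - 1) :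
    ∑' i : ℕ, (c i : ℝ) / (b : ℝ) ^ (i + 1) ∈ Icc ((b : ℝ) - 1)⁻¹ 1 := by
  have hB : (1 : ℝ) < b := by exact_mod_cast hb
  have hcR : ∀ i, (1 : ℝ) ≤ c i ∧ (c i : ℝ) ≤ b - 1 := fun i =>
    ⟨by exact_mod_cast (hc i).1,
      by rw [← Nat.cast_one, ← Nat.cast_sub hb.le]; exact_mod_cast (hc i).2⟩
  have hsum := summable_digits hb fun i => (hc i).2
  constructor
  · calc ((b : ℝ) - 1)⁻¹ = ∑' i : ℕ, 1 / (b : ℝ) ^ (i + 1) := by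
          rw [tsum_div_pow_succ hB, one_div]
      _ ≤ _ := (summable_div_pow_succ hB 1).tsum_le_tsum
          (fun i => by gcongr; exact (hcR i).1) hsum
  · calc _ ≤ ∑' i : ℕ, ((b : ℝ) - 1) / (b : ℝ) ^ (i + 1) :=
          hsum.tsum_le_tsum (fun i => by gcongr; exact (hcR i).2) (summable_div_pow_succ hB _)
      _ = 1 := by rw [tsum_div_pow_succ hB, div_self (by linarith)]

lemma mem_iff (hb : 1 < b) : x ∈ Cb0 b ↔ ∃ c : ℕ → ℕ, (∀ i, 1 ≤ c i ∧ c i ≤ b - 1) ∧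
    x = ∑' i : ℕ, (c i : ℝ) / (b : ℝ) ^ (i + 1) := by
  refine ⟨fun hx => hx.2, ?_⟩
  rintro ⟨c, hc, rfl⟩
  have hm := tsum_digits_mem_Icc hb hc
  have hB : (1 : ℝ) < b := by exact_mod_cast hb
  exact ⟨⟨(inv_pos.mpr (by linarith)).le.trans hm.1, hm.2⟩, c, hc, rfl⟩

lemma inv_sub_one_le (hb : 1 < b) (hx : x ∈ Cb0 b) : ((b : ℝ) - 1)⁻¹ ≤ x := by
  obtain ⟨c, hc, rfl⟩ := (mem_iff hb).mp hx
  exact (tsum_digits_mem_Icc hb hc).1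

lemma pos (hb : 1 < b) (hx : x ∈ Cb0 b) : 0 < x := by
  have hB : (1 : ℝ) < b := by exact_mod_cast hb
  exact (inv_pos.mpr (by linarith)).trans_le (inv_sub_one_le hb hx)

lemma le_one (hx : x ∈ Cb0 b) : x ≤ 1 := hx.1.2

lemma div_sub_one_mem (hb : 1 < b) (hk1 : 1 ≤ k) (hk : k ≤ b - 1) :
    (k : ℝ) / (b - 1) ∈ Cb0 b :=
  (mem_iff hb).mpr
    ⟨fun _ => k, fun _ => ⟨hk1, hk⟩, (tsum_div_pow_succ (by exact_mod_cast hb) k).symm⟩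

lemma inv_sub_one_mem (hb : 1 < b) : ((b : ℝ) - 1)⁻¹ ∈ Cb0 b := by
  simpa using div_sub_one_mem hb le_rfl (Nat.le_sub_one_of_lt hb)

lemma one_mem (hb : 1 < b) : (1 : ℝ) ∈ Cb0 b := by
  have h := div_sub_one_mem hb (Nat.le_sub_one_of_lt hb) le_rfl
  have hB : (1 : ℝ) < b := by exact_mod_cast hb
  rwa [Nat.cast_sub hb.le, Nat.cast_one, div_self (by linarith)] at h

lemma sInf_eq (hb : 1 < b) : sInf (Cb0 b) = ((b : ℝ) - 1)⁻¹ :=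
  IsLeast.csInf_eq ⟨inv_sub_one_mem hb, fun _ hx => inv_sub_one_le hb hx⟩

lemma sSup_eq (hb : 1 < b) : sSup (Cb0 b) = 1 :=
  IsGreatest.csSup_eq ⟨one_mem hb, fun _ hx => le_one hx⟩

lemma bddBelow : BddBelow (Cb0 b) := ⟨0, fun _ hx => hx.1.1⟩

lemma bddAbove : BddAbove (Cb0 b) := ⟨1, fun _ hx => hx.1.2⟩

noncomputable def prependDigit (b j : ℕ) (y : ℝ) : ℝ := (y + j) / b

lemma tsum_digits_eq_prependDigit (hb : 1 < b) {c : ℕ → ℕ} (hc : ∀ i, c i ≤ b - 1) :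
    ∑' i : ℕ, (c i : ℝ) / (b : ℝ) ^ (i + 1) =
      prependDigit b (c 0) (∑' i : ℕ, (c (i + 1) : ℝ) / (b : ℝ) ^ (i + 1)) := by
  rw [(summable_digits hb hc).tsum_eq_zero_add, prependDigit, add_div, add_comm, ← tsum_div_const]
  congr 1
  · refine tsum_congr fun i => ?_
    rw [pow_succ _ (i + 1), div_div]
  · simp

lemma prependDigit_mem (hb : 1 < b) (hy : y ∈ Cb0 b) (hj1 : 1 ≤ j) (hj : j ≤ b - 1) :
    prependDigit b j y ∈ Cb0 b := by
  obtain ⟨c, hc, rfl⟩ := (mem_iff hb).mp hy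
  refine (mem_iff hb).mpr ⟨fun i => Nat.casesOn i j c, fun i => ?_, ?_⟩
  · cases i
    exacts [⟨hj1, hj⟩, hc _]
  · refine (tsum_digits_eq_prependDigit hb (c := fun i => Nat.casesOn i j c) fun i => ?_).symm
    cases i
    exacts [hj, (hc _).2]

lemma exists_prependDigit_eq (hb : 1 < b) (hx : x ∈ Cb0 b) :
    ∃ j, 1 ≤ j ∧ j ≤ b - 1 ∧ ∃ y ∈ Cb0 b, x = prependDigit b j y := by
  obtain ⟨c, hc, rfl⟩ := (mem_iff hb).mp hx
  exact ⟨c 0, (hc 0).1, (hc 0).2, _, (mem_iff hb).mpr ⟨_, fun i => hc (i + 1), rfl⟩,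
    tsum_digits_eq_prependDigit hb fun i => (hc i).2⟩

lemma prependDigit_sub_prependDigit (b j : ℕ) (x y : ℝ) :
    prependDigit b j y - prependDigit b j x = (y - x) / b := by
  simp only [prependDigit]
  ring

lemma strictMono_prependDigit (hb : 0 < b) : StrictMono (prependDigit b j) := fun x y hxy => by
  unfold prependDigit
  gcongr

lemma prependDigit_le_prependDigit (hkj : k ≤ j) (hxy : x ≤ y) :
    prependDigit b k x ≤ prependDigit b j y := by
  unfold prependDigit
  gcongr

lemma prependDigit_lt_prependDigit (hb : 0 < b) (hkj : k < j) (hy : y ≤ 1) (hz : 0 < z) :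
    prependDigit b k y < prependDigit b j z := by
  have : (k : ℝ) + 1 ≤ j := by exact_mod_cast hkj
  unfold prependDigit
  exact div_lt_div_of_pos_right (by linarith) (by positivity)

lemma prependDigit_one_inv_sub_one (hb : 1 < b) :
    prependDigit b 1 ((b : ℝ) - 1)⁻¹ = ((b : ℝ) - 1)⁻¹ := by
  have hB : (1 : ℝ) < b := by exact_mod_cast hb
  have : (b : ℝ) - 1 ≠ 0 := by linarith
  unfold prependDigit
  field_simp
  ring

lemma prependDigit_sub_one_one (hb : 1 < b) : prependDigit b (b - 1) 1 = 1 := by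
  have hB : (0 : ℝ) < b := by positivity
  rw [prependDigit, Nat.cast_sub hb.le]
  field_simp
  ring

lemma prependDigit_succ_sub_prependDigit (b j : ℕ) :
    prependDigit b (j + 1) ((b : ℝ) - 1)⁻¹ - prependDigit b j 1 =
      ((b : ℝ) - 1)⁻¹ / b := by
  simp only [prependDigit]
  push_cast
  ring

lemma exists_eq_prependDigit_of_mem (hb : 1 < b) {w : ℝ} (hw : w ∈ Cb0 b)
    (hlo : prependDigit b j ((b : ℝ) - 1)⁻¹ ≤ w) (hhi : w ≤ prependDigit b j 1) :
    ∃ y ∈ Cb0 b, w = prependDigit b j y := by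
  obtain ⟨k, -, -, y, hy, rfl⟩ := exists_prependDigit_eq hb hw
  rcases lt_trichotomy k j with hkj | rfl | hjk
  · have := prependDigit_lt_prependDigit (b := b) (by omega) hkj (le_one hy)
      (pos hb (inv_sub_one_mem hb))
    linarith
  · exact ⟨y, hy, rfl⟩
  · have := prependDigit_lt_prependDigit (b := b) (by omega) hjk le_rfl (pos hb hy)
    linarith

lemma prependDigit_inv_sub_one_add (hb : 1 < b) (j : ℕ) :
    prependDigit b j ((b : ℝ) - 1)⁻¹ + (b - 2) * (((b : ℝ) - 1)⁻¹ / b) =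
      prependDigit b j 1 := by
  have hB : (1 : ℝ) < b := by exact_mod_cast hb
  have : (b : ℝ) - 1 ≠ 0 := by linarith
  unfold prependDigit
  field_simp
  ring

lemma isGap_prependDigit (hb : 1 < b) (h : IsGap (Cb0 b) y z) (hj1 : 1 ≤ j) (hj : j ≤ b - 1) :
    IsGap (Cb0 b) (prependDigit b j y) (prependDigit b j z) := by
  have hf := strictMono_prependDigit (j := j) (Nat.zero_lt_of_lt hb)
  refine ⟨prependDigit_mem hb h.1 hj1 hj, prependDigit_mem hb h.2.1 hj1 hj, hf h.2.2.1,
    eq_empty_iff_forall_notMem.mpr fun w ⟨⟨hyw, hwz⟩, hw⟩ => ?_⟩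
  obtain ⟨v, hv, rfl⟩ := exists_eq_prependDigit_of_mem hb hw
    ((hf.monotone (inv_sub_one_le hb h.1)).trans hyw.le) (hwz.le.trans (hf.monotone (le_one h.2.1)))
  rcases h.le_or_le hv with hvy | hzv
  · exact (hf.monotone hvy).not_gt hyw
  · exact (hf.monotone hzv).not_gt hwz

lemma isGap_of_isGap_prependDigit (hb : 1 < b)
    (h : IsGap (Cb0 b) (prependDigit b j y) (prependDigit b j z))
    (hy : y ∈ Cb0 b) (hz : z ∈ Cb0 b) (hj1 : 1 ≤ j) (hj : j ≤ b - 1) :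
    IsGap (Cb0 b) y z := by
  have hf := strictMono_prependDigit (j := j) (Nat.zero_lt_of_lt hb)
  refine ⟨hy, hz, hf.lt_iff_lt.mp h.2.2.1,
    eq_empty_iff_forall_notMem.mpr fun w ⟨⟨hyw, hwz⟩, hw⟩ => ?_⟩
  exact eq_empty_iff_forall_notMem.mp h.2.2.2 _
    ⟨⟨hf hyw, hf hwz⟩, prependDigit_mem hb hw hj1 hj⟩

lemma exists_isGap_eq_prependDigit (hb : 1 < b) (h : IsGap (Cb0 b) c d) (hj1 : 1 ≤ j)
    (hj : j ≤ b - 1) (hc : prependDigit b j ((b : ℝ) - 1)⁻¹ ≤ c)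
    (hd : d ≤ prependDigit b j 1) :
    ∃ c' d', IsGap (Cb0 b) c' d' ∧ c = prependDigit b j c' ∧ d = prependDigit b j d' := by
  obtain ⟨c', hc', rfl⟩ := exists_eq_prependDigit_of_mem hb h.1 hc (h.2.2.1.le.trans hd)
  obtain ⟨d', hd', rfl⟩ := exists_eq_prependDigit_of_mem hb h.2.1 (hc.trans h.2.2.1.le) hd
  exact ⟨c', d', isGap_of_isGap_prependDigit hb h hc' hd' hj1 hj, rfl, rfl⟩

lemma isGap_top (hb : 1 < b) (hj1 : 1 ≤ j) (hj : j ≤ b - 2) :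
    IsGap (Cb0 b) (prependDigit b j 1) (prependDigit b (j + 1) ((b : ℝ) - 1)⁻¹) := by
  have hm := inv_sub_one_mem hb
  refine ⟨prependDigit_mem hb (one_mem hb) hj1 (by omega),
    prependDigit_mem hb hm (by omega) (by omega),
    prependDigit_lt_prependDigit (by omega) (Nat.lt_succ_self j) le_rfl (pos hb hm),
    eq_empty_iff_forall_notMem.mpr fun w ⟨⟨hlo, hhi⟩, hw⟩ => ?_⟩
  obtain ⟨k, -, -, y, hy, rfl⟩ := exists_prependDigit_eq hb hw
  rcases le_or_gt k j with hkj | hjk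
  · exact (prependDigit_le_prependDigit hkj (le_one hy)).not_gt hlo
  · exact (prependDigit_le_prependDigit (Nat.succ_le_of_lt hjk) (inv_sub_one_le hb hy)).not_gt hhi

lemma isGap_cases (hb : 1 < b) (h : IsGap (Cb0 b) a β) :
    (∃ j, 1 ≤ j ∧ j ≤ b - 2 ∧
      a = prependDigit b j 1 ∧ β = prependDigit b (j + 1) ((b : ℝ) - 1)⁻¹) ∨
    ∃ j, 1 ≤ j ∧ j ≤ b - 1 ∧ ∃ a' β', IsGap (Cb0 b) a' β' ∧
      a = prependDigit b j a' ∧ β = prependDigit b j β' := by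
  have hm := inv_sub_one_mem hb
  obtain ⟨j, hj1, hj, y, hy, rfl⟩ := exists_prependDigit_eq hb h.1
  obtain ⟨k, hk1, hk, z, hz, rfl⟩ := exists_prependDigit_eq hb h.2.1
  rcases lt_trichotomy j k with hjk | rfl | hkj
  · have hya : prependDigit b j y ≤ prependDigit b j 1 :=
      prependDigit_le_prependDigit le_rfl (le_one hy)
    have hsep : prependDigit b j 1 < prependDigit b (j + 1) ((b : ℝ) - 1)⁻¹ :=
      prependDigit_lt_prependDigit (by omega) (Nat.lt_succ_self j) le_rfl (pos hb hm)
    have hzβ : prependDigit b (j + 1) ((b : ℝ) - 1)⁻¹ ≤ prependDigit b k z :=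
      prependDigit_le_prependDigit hjk (inv_sub_one_le hb hz)
    refine .inl ⟨j, hj1, by omega, le_antisymm hya ?_, le_antisymm ?_ hzβ⟩
    · refine (h.le_or_le (prependDigit_mem hb (one_mem hb) hj1 hj)).resolve_right ?_
      exact not_le.mpr (hsep.trans_le hzβ)
    · refine (h.le_or_le (prependDigit_mem hb hm (by omega) (by omega))).resolve_left ?_
      exact not_le.mpr (hya.trans_lt hsep)
  · exact .inr ⟨j, hj1, hj, y, z, isGap_of_isGap_prependDigit hb h hy hz hj1 hj, rfl, rfl⟩
  · exact absurd h.2.2.1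
      (prependDigit_lt_prependDigit (by omega) hkj (le_one hz) (pos hb hy)).not_gt

@[elab_as_elim]
theorem isGap_induction (hb : 1 < b) {P : ℝ → ℝ → Prop}
    (top : ∀ j, 1 ≤ j → j ≤ b - 2 →
      P (prependDigit b j 1) (prependDigit b (j + 1) ((b : ℝ) - 1)⁻¹))
    (scale : ∀ j a β, 1 ≤ j → j ≤ b - 1 → IsGap (Cb0 b) a β → P a β →
      P (prependDigit b j a) (prependDigit b j β))
    (h : IsGap (Cb0 b) a β) : P a β := by
  have hB : (1 : ℝ) < b := by exact_mod_cast hb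
  -- undoing a `prependDigit b j` multiplies the length of a gap by `b`, and gaps lie in `[0, 1]`
  suffices ∀ n : ℕ, ∀ a β, IsGap (Cb0 b) a β → 1 < (β - a) * b ^ n → P a β by
    obtain ⟨n, hn⟩ := pow_unbounded_of_one_lt (β - a)⁻¹ hB
    exact this n a β h ((inv_lt_iff_one_lt_mul₀' (sub_pos.mpr h.2.2.1)).mp hn)
  intro n
  induction n with
  | zero =>
    intro a β h hlen
    linarith [h.1.1.1, le_one h.2.1, pow_zero (b : ℝ)]
  | succ n ih =>
    intro a β h hlen
    rcases isGap_cases hb h with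
      ⟨j, hj1, hj, rfl, rfl⟩ | ⟨j, hj1, hj, a', β', h', rfl, rfl⟩
    · exact top j hj1 hj
    · refine scale j a' β' hj1 hj h' (ih a' β' h' ?_)
      have : (β' - a') / b * (b : ℝ) ^ (n + 1) = (β' - a') * b ^ n := by
        rw [pow_succ]
        field_simp
      rwa [prependDigit_sub_prependDigit, this] at hlen

lemma sub_le_of_isGap (hb : 1 < b) (h : IsGap (Cb0 b) a β) :
    β - a ≤ ((b : ℝ) - 1)⁻¹ / b := by
  have hB : (1 : ℝ) ≤ b := by exact_mod_cast hb.le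
  refine isGap_induction hb (P := fun a β => β - a ≤ ((b : ℝ) - 1)⁻¹ / b) ?_ ?_ h
  · intro j _ _
    rw [prependDigit_succ_sub_prependDigit]
  · intro j a β _ _ hab ih
    rw [prependDigit_sub_prependDigit]
    exact (div_le_self (sub_pos.mpr hab.2.2.1).le hB).trans ih

lemma sub_lt_of_isGap_of_le (hb : 1 < b) (h : IsGap (Cb0 b) c d) (hj1 : 1 ≤ j) (hj : j ≤ b - 1)
    (hc : prependDigit b j ((b : ℝ) - 1)⁻¹ ≤ c) (hd : d ≤ prependDigit b j 1) :
    d - c < ((b : ℝ) - 1)⁻¹ / b := by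
  have hB : (1 : ℝ) < b := by exact_mod_cast hb
  obtain ⟨c', d', h', rfl, rfl⟩ := exists_isGap_eq_prependDigit hb h hj1 hj hc hd
  have hpos : 0 < ((b : ℝ) - 1)⁻¹ / b := div_pos (inv_pos.mpr (by linarith)) (by linarith)
  rw [prependDigit_sub_prependDigit]
  calc (d' - c') / b ≤ ((b : ℝ) - 1)⁻¹ / b / b := by gcongr; exact sub_le_of_isGap hb h'
    _ < ((b : ℝ) - 1)⁻¹ / b := div_lt_self hpos hB

lemma eq_sInf_or_mem_leftEnds (hb : 1 < b) (hj1 : 1 ≤ j) (hj : j ≤ b - 1)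
    (ha : prependDigit b j ((b : ℝ) - 1)⁻¹ ≤ a)
    (hlen : β - a ≤ ((b : ℝ) - 1)⁻¹ / b) :
    prependDigit b j ((b : ℝ) - 1)⁻¹ = sInf (Cb0 b) ∨
      prependDigit b j ((b : ℝ) - 1)⁻¹ ∈ leftEnds (Cb0 b) a β := by
  rcases Nat.lt_or_ge j 2 with hj2 | hj2
  · obtain rfl : j = 1 := by omega
    exact .inl (by rw [sInf_eq hb, prependDigit_one_inv_sub_one hb])
  · obtain ⟨i, rfl⟩ : ∃ i, j = i + 1 := ⟨j - 1, by omega⟩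
    exact .inr ⟨_, isGap_top hb (by omega) (by omega), ha,
      by rwa [prependDigit_succ_sub_prependDigit]⟩

lemma eq_sSup_or_mem_rightEnds (hb : 1 < b) (hj1 : 1 ≤ j) (hj : j ≤ b - 1)
    (hβ : β ≤ prependDigit b j 1) (hlen : β - a ≤ ((b : ℝ) - 1)⁻¹ / b) :
    prependDigit b j 1 = sSup (Cb0 b) ∨ prependDigit b j 1 ∈ rightEnds (Cb0 b) a β := by
  rcases eq_or_lt_of_le hj with rfl | hj'
  · exact .inl (by rw [sSup_eq hb, prependDigit_sub_one_one hb])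
  · exact .inr ⟨_, isGap_top hb hj1 (by omega), hβ,
      by rwa [prependDigit_succ_sub_prependDigit]⟩

lemma isLeftPieceEnd (hb : 1 < b) (h : IsGap (Cb0 b) a β) :
    IsLeftPieceEnd (Cb0 b) a β (a - (b - 2) * (β - a)) := by
  have hm := inv_sub_one_mem hb
  refine isGap_induction hb
    (P := fun a β => IsLeftPieceEnd (Cb0 b) a β (a - (b - 2) * (β - a))) ?_ ?_ h
  · intro j hj1 hj
    have hgap := prependDigit_succ_sub_prependDigit b j
    have hp : prependDigit b j 1 - (b - 2) *
        (prependDigit b (j + 1) ((b : ℝ) - 1)⁻¹ - prependDigit b j 1) =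
        prependDigit b j ((b : ℝ) - 1)⁻¹ := by
      rw [hgap, ← prependDigit_inv_sub_one_add hb, add_sub_cancel_right]
    rw [hp]
    refine ⟨prependDigit_mem hb hm hj1 (by omega), eq_sInf_or_mem_leftEnds hb hj1 (by omega)
      (prependDigit_le_prependDigit le_rfl (le_one hm)) hgap.le,
      fun c d hcd hc hd => hgap ▸ sub_lt_of_isGap_of_le hb hcd hj1 (by omega) hc hd⟩
  · rintro j a β hj1 hj hab ⟨hpC, hp, hsmall⟩
    have hf := strictMono_prependDigit (j := j) (Nat.zero_lt_of_lt hb)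
    rw [show prependDigit b j a - (b - 2) * (prependDigit b j β - prependDigit b j a) =
      prependDigit b j (a - (b - 2) * (β - a)) by simp only [prependDigit]; ring]
    refine ⟨prependDigit_mem hb hpC hj1 hj, ?_, fun c d hcd hc hd => ?_⟩
    · rcases hp with hp | ⟨c, hcp, hpa, hlen⟩
      · rw [sInf_eq hb] at hp
        rw [hp]
        exact eq_sInf_or_mem_leftEnds hb hj1 hj (hf.monotone (inv_sub_one_le hb hab.1))
          (sub_le_of_isGap hb (isGap_prependDigit hb hab hj1 hj))
      · refine .inr ⟨_, isGap_prependDigit hb hcp hj1 hj, hf.monotone hpa, ?_⟩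
        rw [prependDigit_sub_prependDigit, prependDigit_sub_prependDigit]
        exact div_le_div_of_nonneg_right hlen (by positivity)
    · obtain ⟨c', d', h', rfl, rfl⟩ := exists_isGap_eq_prependDigit hb hcd hj1 hj
        ((hf.monotone (inv_sub_one_le hb hpC)).trans hc) (hd.trans (hf.monotone (le_one hab.1)))
      rw [prependDigit_sub_prependDigit, prependDigit_sub_prependDigit]
      exact div_lt_div_of_pos_right (hsmall c' d' h' (hf.le_iff_le.mp hc) (hf.le_iff_le.mp hd))
        (by positivity)

lemma isRightPieceEnd (hb : 1 < b) (h : IsGap (Cb0 b) a β) :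
    IsRightPieceEnd (Cb0 b) a β (β + (b - 2) * (β - a)) := by
  have h1 := one_mem hb
  refine isGap_induction hb
    (P := fun a β => IsRightPieceEnd (Cb0 b) a β (β + (b - 2) * (β - a))) ?_ ?_ h
  · intro j hj1 hj
    have hgap := prependDigit_succ_sub_prependDigit b j
    have hq : prependDigit b (j + 1) ((b : ℝ) - 1)⁻¹ + (b - 2) *
        (prependDigit b (j + 1) ((b : ℝ) - 1)⁻¹ - prependDigit b j 1) =
        prependDigit b (j + 1) 1 := by
      rw [hgap, prependDigit_inv_sub_one_add hb]
    rw [hq]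
    refine ⟨prependDigit_mem hb h1 (by omega) (by omega),
      eq_sSup_or_mem_rightEnds hb (by omega) (by omega)
        (prependDigit_le_prependDigit le_rfl (inv_sub_one_le hb h1)) hgap.le,
      fun c d hcd hc hd => hgap ▸ sub_lt_of_isGap_of_le hb hcd (by omega) (by omega) hc hd⟩
  · rintro j a β hj1 hj hab ⟨hqC, hq, hsmall⟩
    have hf := strictMono_prependDigit (j := j) (Nat.zero_lt_of_lt hb)
    rw [show prependDigit b j β + (b - 2) * (prependDigit b j β - prependDigit b j a) =
      prependDigit b j (β + (b - 2) * (β - a)) by simp only [prependDigit]; ring]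
    refine ⟨prependDigit_mem hb hqC hj1 hj, ?_, fun c d hcd hc hd => ?_⟩
    · rcases hq with hq | ⟨d, hqd, hβq, hlen⟩
      · rw [sSup_eq hb] at hq
        rw [hq]
        exact eq_sSup_or_mem_rightEnds hb hj1 hj (hf.monotone (le_one hab.2.1))
          (sub_le_of_isGap hb (isGap_prependDigit hb hab hj1 hj))
      · refine .inr ⟨_, isGap_prependDigit hb hqd hj1 hj, hf.monotone hβq, ?_⟩
        rw [prependDigit_sub_prependDigit, prependDigit_sub_prependDigit]
        exact div_le_div_of_nonneg_right hlen (by positivity)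
    · obtain ⟨c', d', h', rfl, rfl⟩ := exists_isGap_eq_prependDigit hb hcd hj1 hj
        ((hf.monotone (inv_sub_one_le hb hab.2.1)).trans hc) (hd.trans (hf.monotone (le_one hqC)))
      rw [prependDigit_sub_prependDigit, prependDigit_sub_prependDigit]
      exact div_lt_div_of_pos_right (hsmall c' d' h' (hf.le_iff_le.mp hc) (hf.le_iff_le.mp hd))
        (by positivity)

end Cb0

theorem thickness_Cb0 (b : ℕ) (hb : 3 ≤ b) :
    thickness (Cb0 b) = (b : ℝ) - 2 := by
  have hb1 : 1 < b := by omega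
  refine thickness_eq_of_forall_gapRatio_eq
    ⟨_, _, Cb0.isGap_top hb1 le_rfl (by omega : 1 ≤ b - 2)⟩ fun a β h => ?_
  rw [gapRatio_eq (Cb0.isLeftPieceEnd hb1 h) (Cb0.isRightPieceEnd hb1 h) Cb0.bddBelow
    Cb0.bddAbove, sub_sub_cancel, add_sub_cancel_left, min_self,
    mul_div_cancel_right₀ _ (sub_pos.mpr h.2.2.1).ne']
end

section
/- Let $k \geq 2$ and let $b_1 \leq b_2 \leq \cdots \leq b_k$ be integers with $b_1 \geq 7$. If $k \cdot \frac{4e \cdot 432^2}{\log 4} \leq \frac{b_1 - 2}{\log(b_1-2)}$, then, setting $c := 1 - \frac{1}{\log((b_1-2)/4)}$, one has $c \in (0,1)$ and $\sum_{i=1}^k (b_i - 2)^{-c} \leq \frac{1}{432^2} \left(\frac14\right)^c \left(1 - \left(\frac14\right)^{1-c}\right)$. -/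
set_option maxHeartbeats 1000000

theorem sum_thickness_bound (k : ℕ) (hk : 2 ≤ k) (b : ℕ → ℕ)
    (hmono : ∀ i j, i ≤ j → j < k → b i ≤ b j) (hb0 : 7 ≤ b 0)
    (h : (k : ℝ) * (4 * Real.exp 1 * 432 ^ 2) / Real.log 4 ≤
        ((b 0 : ℝ) - 2) / Real.log ((b 0 : ℝ) - 2)) :
    (1 - 1 / Real.log (((b 0 : ℝ) - 2) / 4)) ∈ Set.Ioo (0 : ℝ) 1 ∧
    ∑ i ∈ Finset.range k, ((b i : ℝ) - 2) ^ (-(1 - 1 / Real.log (((b 0 : ℝ) - 2) / 4))) ≤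
      (1 / 432 ^ 2 : ℝ) * (1 / 4 : ℝ) ^ (1 - 1 / Real.log (((b 0 : ℝ) - 2) / 4)) *
        (1 - (1 / 4 : ℝ) ^ (1 - (1 - 1 / Real.log (((b 0 : ℝ) - 2) / 4)))) := by
  set B : ℝ := (b 0 : ℝ) - 2 with hBdef
  have hb7 : (7:ℝ) ≤ (b 0 : ℝ) := by exact_mod_cast hb0
  have hB5 : (5:ℝ) ≤ B := by simp [hBdef]; linarith
  have hBpos : 0 < B := by linarith
  have he9 : Real.exp 1 < 2.7182818286 := Real.exp_one_lt_d9
  have he2 : (2:ℝ) ≤ Real.exp 1 := by have := Real.add_one_le_exp (1:ℝ); linarith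
  have hlog4pos : (0:ℝ) < Real.log 4 := Real.log_pos (by norm_num)
  have hlog4le3 : Real.log 4 ≤ 3 := by
    have := Real.log_le_sub_one_of_pos (show (0:ℝ) < 4 by norm_num); linarith
  have hk2 : (2:ℝ) ≤ (k:ℝ) := by exact_mod_cast hk
  set lB := Real.log B with hlBdef
  have hlogB1 : 1 < lB := by
    rw [hlBdef, Real.lt_log_iff_exp_lt hBpos]; linarith
  have hlogBpos : 0 < lB := by linarith
  have hBbig : 1000 ≤ B := by
    have h1 : (1000:ℝ) ≤ (k : ℝ) * (4 * Real.exp 1 * 432 ^ 2) / Real.log 4 := by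
      rw [le_div_iff₀ hlog4pos]
      nlinarith
    have h2 : (1000:ℝ) ≤ B / lB := le_trans h1 h
    rw [le_div_iff₀ hlogBpos] at h2
    nlinarith
  set L := Real.log (B/4) with hLdef
  have hL : L = lB - Real.log 4 := by
    rw [hLdef, hlBdef, Real.log_div hBpos.ne' (by norm_num)]
  have hL1 : 1 < L := by
    rw [hLdef, Real.lt_log_iff_exp_lt (by positivity)]
    linarith
  have hLpos : 0 < L := by linarith
  set d := 1/L with hd
  have hd0 : 0 < d := by rw [hd]; positivity
  have hd1 : d < 1 := by rw [hd]; rw [div_lt_one hLpos]; linarith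
  constructor
  · exact ⟨by linarith, by linarith⟩
  set l4 := Real.log 4 with hl4def
  have hdL : d * L = 1 := by rw [hd]; field_simp
  have hlB : lB = l4 + L := by linarith
  -- key exponential inequality
  have key1 : (1 + d*l4) * (1 - l4/lB) = 1 := by
    rw [hd]
    field_simp
    linear_combination (-l4) * hL
  have key2 : Real.exp (-(d*l4)) ≤ 1 - l4/lB := by
    have h1 : 1 + d*l4 ≤ Real.exp (d*l4) := by
      have := Real.add_one_le_exp (d*l4); linarith
    have hpos : 0 < 1 + d*l4 := by positivity
    have h2 : (1 - l4/lB) = (1 + d*l4)⁻¹ := by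
      refine eq_inv_of_mul_eq_one_left ?_
      rw [mul_comm]; exact key1
    rw [Real.exp_neg, h2]
    exact inv_anti₀ hpos h1
  have h3 : (k:ℝ)*(4*Real.exp 1*432^2)*lB ≤ B*l4 := (div_le_div_iff₀ hlog4pos hlogBpos).mp h
  have T' : (k:ℝ) * (4*Real.exp 1/B) ≤ 1/432^2 * (1 - Real.exp (-(d*l4))) := by
    have h6 : (k:ℝ)*(4*Real.exp 1*432^2) ≤ B*(l4/lB) := by
      rw [mul_div_assoc'] ; exact (le_div_iff₀ hlogBpos).mpr h3
    have hfrac : l4/lB ≤ 1 - Real.exp (-(d*l4)) := by linarith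
    have h5 : B * (l4/lB) ≤ B * (1 - Real.exp (-(d*l4))) :=
      mul_le_mul_of_nonneg_left hfrac hBpos.le
    rw [← mul_div_assoc, div_le_iff₀ hBpos]
    nlinarith
  -- rewrite rpow's
  set P := Real.exp (-((1-d)*l4)) with hPdef
  have hPpos : 0 < P := Real.exp_pos _
  have hexpL : Real.exp L = B/4 := by rw [hLdef]; exact Real.exp_log (by positivity)
  have hE : B ^ (-(1-d)) = P * (4*Real.exp 1/B) := by
    rw [Real.rpow_def_of_pos hBpos, hPdef]
    have h4B : 4*Real.exp 1/B = Real.exp (1 - L) := by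
      rw [Real.exp_sub, hexpL]; field_simp
    rw [h4B, ← Real.exp_add]
    congr 1
    rw [← hlBdef]
    linear_combination (-(1-d)) * hlB + hdL
  have hP' : (1/4:ℝ)^(1-d) = P := by
    rw [Real.rpow_def_of_pos (by norm_num : (0:ℝ) < 1/4), hPdef, one_div, Real.log_inv, ← hl4def]
    congr 1; ring
  have hX : (1/4:ℝ)^(1-(1-d)) = Real.exp (-(d*l4)) := by
    rw [Real.rpow_def_of_pos (by norm_num : (0:ℝ) < 1/4), one_div, Real.log_inv, ← hl4def]
    congr 1; ring
  have hterm : ∀ i ∈ Finset.range k, ((b i:ℝ) - 2) ^ (-(1-d)) ≤ B ^ (-(1-d)) := by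
    intro i hi
    have h0 : b 0 ≤ b i := hmono 0 i (Nat.zero_le i) (Finset.mem_range.mp hi)
    have h1 : (b 0:ℝ) ≤ (b i:ℝ) := by exact_mod_cast h0
    have hbi : B ≤ (b i:ℝ) - 2 := by rw [hBdef]; linarith
    exact Real.rpow_le_rpow_of_nonpos hBpos hbi (by linarith)
  calc ∑ i ∈ Finset.range k, ((b i:ℝ) - 2) ^ (-(1-d))
      ≤ (Finset.range k).card • (B ^ (-(1-d))) := Finset.sum_le_card_nsmul _ _ _ hterm
    _ = (k:ℝ) * B ^ (-(1-d)) := by rw [Finset.card_range, nsmul_eq_mul]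
    _ ≤ (1 / 432 ^ 2 : ℝ) * (1/4:ℝ)^(1-d) * (1 - (1/4:ℝ)^(1-(1-d))) := by
        rw [hE, hP', hX]
        have := mul_le_mul_of_nonneg_left T' hPpos.le
        linarith
end

section
/- There exists an integer $M$ (e.g., $M = 79904626$ works) such that for any three integers $b_1, b_2, b_3 \geq M$, there are infinitely many positive integers whose base-$b_1$, base-$b_2$, and base-$b_3$ expansions all omit the digit $0$. -/
/-!
The `j`-th base-`b` digit of `N` is zero exactly when `N mod b^(j+1) < b^j`: a union of "zones"
of width `b^j` repeating with period `b^(j+1)`. Suppose every condition of period at least `8L`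
holds on an interval of length `L`, and cut it into 64 blocks of length `L' = ⌊L/64⌋`. For each
base at most one scale has period in `[8L', 8L)`; its zones are narrower than `L'`, and the 64
blocks meet at most 9 of its periods, each zone meeting at most 2 blocks, so it spoils at most 18
blocks. Three bases spoil at most 54, and a surviving block satisfies every condition of period at
least `8L'`. Iterating until every base is at least `8L`, all conditions hold at some point of the
original interval; starting from `[T+1, 2T+2)` this point exceeds `T`.
-/

open Finset

/-- The `j`-th base-`b` digit of `N` is nonzero, or `N` has no `j`-th digit. It is phrased
through `N % b ^ (j + 1)` because the condition is then periodic in `N` with period `b ^ (j + 1)`. -/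
def DigitNeZero (b N j : ℕ) : Prop :=
  b ^ j ≤ N → b ^ j ≤ N % b ^ (j + 1)

lemma digitNeZero_of_lt {b N j : ℕ} (h : N < b ^ (j + 1)) : DigitNeZero b N j := by
  intro hN
  rwa [Nat.mod_eq_of_lt h]

lemma digits_ne_zero_of_forall_digitNeZero {b N : ℕ} (hb : 1 < b)
    (h : ∀ j, DigitNeZero b N j) : ∀ d ∈ Nat.digits b N, d ≠ 0 := by
  intro d hd
  obtain ⟨j, hj, rfl⟩ := List.getElem_of_mem hd
  have hN : N ≠ 0 := by rintro rfl; simp at hj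
  have hjN : b ^ j ≤ N := by
    rw [Nat.length_digits b N hb hN] at hj
    exact Nat.pow_le_of_le_log hN (by omega)
  have hdigit : N % b ^ (j + 1) / b ^ j = N / b ^ j % b := by
    rw [pow_succ, Nat.mod_mul_right_div_self]
  rw [← List.getD_eq_getElem _ 0, Nat.getD_digits N j hb, ← hdigit]
  exact (Nat.div_pos (h j hjN) (by positivity)).ne'

lemma le_mod_of_add_le_mod {P c w N L : ℕ} (h : L + c ≤ w % P) (hNw : N ≤ w)
    (hwN : w ≤ N + L) : c ≤ N % P := by
  rcases P.eq_zero_or_pos with rfl | hP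
  · simp only [Nat.mod_zero] at h ⊢
    omega
  have hw := Nat.div_add_mod w P
  have hsub : (N - P * (w / P)) % P = N % P := Nat.sub_mul_mod (by omega)
  have hlt : N - P * (w / P) < P := by
    have := Nat.mod_lt w hP
    omega
  rw [← hsub, Nat.mod_eq_of_lt hlt]
  omega

lemma card_filter_mod_lt_le {n m P W L u : ℕ} (hP : 0 < P) (hn : n * L ≤ m * P)
    (hW : W ≤ 2 * L) : #{k ∈ range n | (u + (k + 1) * L) % P < W} ≤ 2 * (m + 1) := by
  set s := {k ∈ range n | (u + (k + 1) * L) % P < W}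
  set q : ℕ → ℕ := fun k => (u + (k + 1) * L) / P
  have hq : ∀ k ∈ s, q k ∈ Icc (u / P) (u / P + m) := by
    intro k hk
    have hkn : k < n := mem_range.mp (mem_filter.mp hk).1
    have hkL : (k + 1) * L ≤ m * P := (Nat.mul_le_mul_right L hkn).trans hn
    refine mem_Icc.mpr ⟨Nat.div_le_div_right (Nat.le_add_right _ _), ?_⟩
    rw [← Nat.add_mul_div_right u m hP]
    exact Nat.div_le_div_right (by omega)
  -- Points of `s` with the same quotient have residues in `[0, 2 L)`, so they are less than
  -- two steps of `L` apart.
  have hclose : ∀ k ∈ s, ∀ k' ∈ s, q k = q k' → k' < k + 2 := by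
    intro k hk k' hk' hqk
    have hr := (mem_filter.mp hk).2
    have hr' := (mem_filter.mp hk').2
    have e := Nat.div_add_mod (u + (k + 1) * L) P
    have e' := Nat.div_add_mod (u + (k' + 1) * L) P
    simp only [q] at hqk
    by_contra! hkk
    have : (k + 3) * L ≤ (k' + 1) * L := Nat.mul_le_mul_right L (by omega)
    have : (k + 3) * L = (k + 1) * L + 2 * L := by ring
    rw [hqk] at e
    omega
  have hfiber : ∀ a ∈ Icc (u / P) (u / P + m), #{k ∈ s | q k = a} ≤ 2 := by
    intro a _
    refine (card_le_card_of_injOn (· % 2) (t := range 2) (fun k _ => ?_) ?_).trans (by simp)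
    · simpa using Nat.mod_lt k two_pos
    · intro k hk k' hk' hpar
      have hk := mem_filter.mp (mem_coe.mp hk)
      have hk' := mem_filter.mp (mem_coe.mp hk')
      have h1 := hclose k hk.1 k' hk'.1 (hk.2.trans hk'.2.symm)
      have h2 := hclose k' hk'.1 k hk.1 (hk'.2.trans hk.2.symm)
      simp only at hpar
      omega
  calc #s ≤ 2 * #(Icc (u / P) (u / P + m)) := card_le_mul_card_image_of_maps_to hq 2 hfiber
    _ = 2 * (m + 1) := by rw [Nat.card_Icc]; omega

lemma eq_of_pow_mem_Ico {b A i j : ℕ} (hb : 1 < b) (hi : b ^ i ∈ Ico A (b * A))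
    (hj : b ^ j ∈ Ico A (b * A)) : i = j := by
  have key : ∀ {i j}, b ^ i ∈ Ico A (b * A) → b ^ j ∈ Ico A (b * A) → i < j + 1 := by
    intro i j hi hj
    rw [← Nat.pow_lt_pow_iff_right hb, pow_succ']
    exact (mem_Ico.mp hi).2.trans_le (Nat.mul_le_mul_left b (mem_Ico.mp hj).1)
  have := key hi hj
  have := key hj hi
  omega

/-- The block `[u + k L', u + (k + 1) L')` may meet a zero-digit zone of base `b` at a scale whose
period lies in `[8 L', 8 L)`. -/
def BlockedBy (b L L' u k : ℕ) : Prop :=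
  ∃ j, b ^ (j + 1) ∈ Ico (8 * L') (8 * L) ∧ (u + (k + 1) * L') % b ^ (j + 1) < L' + b ^ j

open scoped Classical in
lemma card_filter_blockedBy_le {b L L' u : ℕ} (hb : 520 ≤ b) (hL : L ≤ 65 * L') :
    #{k ∈ range 64 | BlockedBy b L L' u k} ≤ 18 := by
  by_cases hscale : ∃ j, b ^ (j + 1) ∈ Ico (8 * L') (8 * L)
  swap
  · push Not at hscale
    rw [filter_false_of_mem fun k _ ⟨j, hj, _⟩ => hscale j hj]
    simp
  obtain ⟨j₀, hj₀⟩ := hscale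
  -- `520 = 8 * 65`: every `b ^ (j + 1) < 8 L` is below `b * 8 L'`, so there is a single scale `j₀`
  -- in the window, and at that scale `b ^ j₀ < L'`.
  have hwindow : 8 * L ≤ b * (8 * L') := by nlinarith
  have hsub : {k ∈ range 64 | BlockedBy b L L' u k} ⊆
      {k ∈ range 64 | (u + (k + 1) * L') % b ^ (j₀ + 1) < L' + b ^ j₀} := by
    intro k
    simp only [mem_filter]
    rintro ⟨hk, j, hj, hres⟩
    have hjj₀ : j + 1 = j₀ + 1 := eq_of_pow_mem_Ico (by omega)
      (Ico_subset_Ico_right hwindow hj) (Ico_subset_Ico_right hwindow hj₀)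
    obtain rfl : j = j₀ := by omega
    exact ⟨hk, hres⟩
  have hsmall : b ^ j₀ < L' := by
    refine Nat.lt_of_mul_lt_mul_right (a := b) ?_
    rw [← pow_succ]
    have := (mem_Ico.mp hj₀).2
    nlinarith
  have hP := (mem_Ico.mp hj₀).1
  refine (card_le_card hsub).trans (card_filter_mod_lt_le (m := 8) ?_ ?_ ?_) <;> omega

open scoped Classical in
theorem exists_mem_Ico_forall_digitNeZero {bs : Finset ℕ} (hbs : ∀ b ∈ bs, 32768 ≤ b)
    (hcard : #bs ≤ 3) (L u : ℕ) (hL : 0 < L)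
    (hu : ∀ b ∈ bs, ∀ j, 8 * L ≤ b ^ (j + 1) → ∀ N ∈ Ico u (u + L), DigitNeZero b N j) :
    ∃ N ∈ Ico u (u + L), ∀ b ∈ bs, ∀ j, DigitNeZero b N j := by
  induction L using Nat.strong_induction_on generalizing u with
  | _ L ih =>
  have hu_mem : u ∈ Ico u (u + L) := by simp [hL]
  by_cases hbase : ∀ b ∈ bs, 8 * L ≤ b
  · exact ⟨u, hu_mem, fun b hb j =>
      hu b hb j ((hbase b hb).trans (Nat.le_self_pow (by omega) b)) u hu_mem⟩
  push Not at hbase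
  obtain ⟨b₀, hb₀, hb₀L⟩ := hbase
  set L' := L / 64
  have hb₀M := hbs b₀ hb₀
  -- `32768 = 8 * 64 ^ 2`, so here `L > 64 ^ 2` and the remainder `L - 64 L'` is at most `L'`.
  have hLL' : L ≤ 65 * L' := by omega
  have hblocked : #{k ∈ range 64 | ∃ b ∈ bs, BlockedBy b L L' u k} < #(range 64) := by
    calc _ ≤ #(bs.biUnion fun b => {k ∈ range 64 | BlockedBy b L L' u k}) := by
          refine card_le_card fun k hk => ?_
          obtain ⟨hk, b, hb, hj⟩ := mem_filter.mp hk
          exact mem_biUnion.mpr ⟨b, hb, mem_filter.mpr ⟨hk, hj⟩⟩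
      _ ≤ ∑ b ∈ bs, 18 := card_biUnion_le.trans (sum_le_sum fun b hb =>
          card_filter_blockedBy_le (by have := hbs b hb; omega) (by omega))
      _ < #(range 64) := by simp; omega
  obtain ⟨k, hk, hfree⟩ := exists_mem_notMem_of_card_lt_card hblocked
  have hk64 : (k + 1) * L' ≤ 64 * L' := Nat.mul_le_mul_right L' (mem_range.mp hk)
  have hkL' : (k + 1) * L' = k * L' + L' := Nat.succ_mul k L'
  obtain ⟨N, hN, hgood⟩ := ih L' (by omega) (u + k * L') (by omega) fun b hb j hj N hN => by
    have hN := mem_Ico.mp hN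
    by_cases hbig : 8 * L ≤ b ^ (j + 1)
    · exact hu b hb j hbig N (mem_Ico.mpr (by omega))
    have hres : L' + b ^ j ≤ (u + (k + 1) * L') % b ^ (j + 1) := not_lt.mp fun h =>
      hfree (mem_filter.mpr ⟨hk, b, hb, j, mem_Ico.mpr ⟨hj, not_le.mp hbig⟩, h⟩)
    exact fun _ => le_mod_of_add_le_mod hres (by omega) (by omega)
  exact ⟨N, mem_Ico.mpr (by have := mem_Ico.mp hN; omega), hgood⟩

theorem three_bases_no_zero_digit :
    ∃ M : ℕ, M ≤ 79904626 ∧ ∀ b1 b2 b3 : ℕ, M ≤ b1 → M ≤ b2 → M ≤ b3 →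
      {N : ℕ | 0 < N ∧ (∀ d ∈ Nat.digits b1 N, d ≠ 0) ∧
        (∀ d ∈ Nat.digits b2 N, d ≠ 0) ∧ (∀ d ∈ Nat.digits b3 N, d ≠ 0)}.Infinite := by
  refine ⟨32768, by norm_num, fun b1 b2 b3 h1 h2 h3 => ?_⟩
  refine Set.infinite_of_not_bddAbove fun ⟨T, hT⟩ => ?_
  have hbs : ∀ b ∈ ({b1, b2, b3} : Finset ℕ), 32768 ≤ b := by
    simp only [mem_insert, mem_singleton]
    omega
  obtain ⟨N, hN, hgood⟩ := exists_mem_Ico_forall_digitNeZero hbs card_le_three (T + 1) (T + 1)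
    (by omega) fun b _ j hj N hN => digitNeZero_of_lt (by rw [mem_Ico] at hN; omega)
  have hdigits : ∀ b ∈ ({b1, b2, b3} : Finset ℕ), ∀ d ∈ Nat.digits b N, d ≠ 0 := fun b hb =>
    digits_ne_zero_of_forall_digitNeZero (by have := hbs b hb; omega) (hgood b hb)
  have hNT := hT ⟨by rw [mem_Ico] at hN; omega, hdigits b1 (by simp), hdigits b2 (by simp),
    hdigits b3 (by simp)⟩
  rw [mem_Ico] at hN
  omega
end

section
/- Let $b = 1+i \in \mathbb{Z}[i]$ and $D_b = \{0, 1\}$. Then every Gaussian integer $z \in \mathbb{Z}[i]$ admits a representation $z = u b^m + \sum_{j=0}^{m-1} r_j b^j$ where $u$ is a unit of $\mathbb{Z}[i]$ (i.e., $u \in \{1, -1, i, -i\}$), $m \geq 0$, and each $r_j \in \{0, 1\}$, or $z = 0$. -/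
private lemma gauss_arith_aux (x y k : ℤ) (hk : x + y = 2 * k + 1)
    (e1 : ¬(x = -1 ∧ y = 0)) (e3 : ¬(x = 0 ∧ y = 1)) (e4 : ¬(x = 0 ∧ y = -1))
    (e5 : ¬(x = -2 ∧ y = 1)) (e6 : ¬(x = -2 ∧ y = -1)) :
    x * x + y * y + 2 * x > 1 := by
  by_contra hcon
  push_neg at hcon
  have hx1 : -2 ≤ x := by nlinarith [sq_nonneg (x + 1), sq_nonneg y]
  have hx2 : x ≤ 0 := by nlinarith [sq_nonneg (x + 1), sq_nonneg y]
  have hy1 : -1 ≤ y := by nlinarith [sq_nonneg (x + 1)]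
  have hy2 : y ≤ 1 := by nlinarith [sq_nonneg (x + 1)]
  interval_cases x <;> interval_cases y <;> omega

private lemma gauss_rep_aux : ∀ n : ℕ, ∀ z : GaussianInt, z.norm.natAbs = n → z ≠ 0 →
    ∃ (u : GaussianInt) (m : ℕ) (r : ℕ → GaussianInt),
      (u = 1 ∨ u = -1 ∨ u = (⟨0, 1⟩ : GaussianInt) ∨ u = -(⟨0, 1⟩ : GaussianInt)) ∧
      (∀ j < m, r j = 0 ∨ r j = 1) ∧
      z = u * (⟨1, 1⟩ : GaussianInt) ^ m +
        ∑ j ∈ Finset.range m, r j * (⟨1, 1⟩ : GaussianInt) ^ j := by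
  intro n
  induction n using Nat.strong_induction_on with
  | _ n ih =>
    intro z hn hz
    set b : GaussianInt := ⟨1,1⟩ with hb
    -- unit cases
    by_cases h1 : z = 1
    · exact ⟨1, 0, fun _ => 0, Or.inl rfl, by simp, by simp [h1]⟩
    by_cases h2 : z = -1
    · exact ⟨-1, 0, fun _ => 0, Or.inr (Or.inl rfl), by simp, by simp [h2]⟩
    by_cases h3 : z = ⟨0,1⟩
    · exact ⟨⟨0,1⟩, 0, fun _ => 0, Or.inr (Or.inr (Or.inl rfl)), by simp, by simp [h3]⟩
    by_cases h4 : z = -⟨0,1⟩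
    · exact ⟨-⟨0,1⟩, 0, fun _ => 0, Or.inr (Or.inr (Or.inr rfl)), by simp, by simp [h4]⟩
    -- special cases -2+i and -2-i
    by_cases h5 : z = ⟨-2,1⟩
    · refine ⟨1, 4, fun j => if j < 2 then 1 else 0, Or.inl rfl, fun j _ => by
        by_cases hj : j < 2 <;> simp [hj], ?_⟩
      rw [h5]
      simp [Finset.sum_range_succ]
      decide
    by_cases h6 : z = ⟨-2,-1⟩
    · refine ⟨1, 5, fun j => if j < 3 then 1 else 0, Or.inl rfl, fun j _ => by
        by_cases hj : j < 3 <;> simp [hj], ?_⟩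
      rw [h6]
      simp [Finset.sum_range_succ]
      decide
    -- general step
    rcases Int.even_or_odd (z.re + z.im) with ⟨k, hk⟩ | ⟨k, hk⟩
    · -- even: z = b * q
      set q : GaussianInt := ⟨k, k - z.re⟩ with hq
      have hzq : z = b * q := by
        ext <;> simp [hq, hb, Zsqrtd.re_mul, Zsqrtd.im_mul] <;> omega
      have hq0 : q ≠ 0 := by
        intro h; apply hz; rw [hzq, h, mul_zero]
      have hnormlt : q.norm < z.norm := by
        have h2 : z.norm = 2 * q.norm := by
          rw [hzq, Zsqrtd.norm_mul]
          norm_num [Zsqrtd.norm_def, hb]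
        have hqpos : 0 < q.norm := GaussianInt.norm_pos.mpr hq0
        omega
      have hlt : q.norm.natAbs < n := by
        have h0 : 0 ≤ q.norm := GaussianInt.norm_nonneg q
        have h0' : 0 ≤ z.norm := GaussianInt.norm_nonneg z
        omega
      obtain ⟨u, m, r, hu, hr, hrep⟩ := ih _ hlt q rfl hq0
      refine ⟨u, m + 1, fun j => if j = 0 then 0 else r (j-1), hu, ?_, ?_⟩
      · intro j hj
        rcases j with _ | j
        · simp
        · simpa using hr j (by omega)
      · rw [Finset.sum_range_succ']
        simp only [Nat.add_sub_cancel, Nat.succ_ne_zero, if_false, if_true, pow_succ, pow_zero]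
        rw [hzq, hrep, mul_add, Finset.mul_sum,
          Finset.sum_congr rfl
            (fun j _ => by ring : ∀ j ∈ Finset.range m, b * (r j * b ^ j) = r j * (b ^ j * b))]
        ring
    · -- odd: z = b * q + 1
      set q : GaussianInt := ⟨k, k - (z.re - 1)⟩ with hq
      have hzq : z = b * q + 1 := by
        ext <;> simp [hq, hb, Zsqrtd.re_mul, Zsqrtd.im_mul] <;> omega
      have hq0 : q ≠ 0 := by
        intro h; apply h1; rw [hzq, h, mul_zero, zero_add]
      have hnormlt : q.norm < z.norm := by
        have hA : (z - 1).norm = 2 * q.norm := by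
          have : z - 1 = b * q := by rw [hzq]; ring
          rw [this, Zsqrtd.norm_mul]
          norm_num [Zsqrtd.norm_def, hb]
        have hB : (z - 1).norm = z.norm - 2 * z.re + 1 := by
          simp [Zsqrtd.norm_def]; ring
        -- need z.norm + 2*z.re - 1 > 0
        have key : z.re * z.re + z.im * z.im + 2 * z.re > 1 := by
          have e1 : ¬(z.re = -1 ∧ z.im = 0) := by
            intro ⟨a, c⟩; exact h2 (by ext <;> simp [a, c])
          have e3 : ¬(z.re = 0 ∧ z.im = 1) := by
            intro ⟨a, c⟩; exact h3 (by ext <;> simp [a, c])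
          have e4 : ¬(z.re = 0 ∧ z.im = -1) := by
            intro ⟨a, c⟩; exact h4 (by ext <;> simp [a, c])
          have e5 : ¬(z.re = -2 ∧ z.im = 1) := by
            intro ⟨a, c⟩; exact h5 (by ext <;> simp [a, c])
          have e6 : ¬(z.re = -2 ∧ z.im = -1) := by
            intro ⟨a, c⟩; exact h6 (by ext <;> simp [a, c])
          exact gauss_arith_aux z.re z.im k hk e1 e3 e4 e5 e6
        have hznorm : z.norm = z.re * z.re + z.im * z.im := by
          simp [Zsqrtd.norm_def]
        omega
      have hlt : q.norm.natAbs < n := by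
        have h0 : 0 ≤ q.norm := GaussianInt.norm_nonneg q
        have h0' : 0 ≤ z.norm := GaussianInt.norm_nonneg z
        omega
      obtain ⟨u, m, r, hu, hr, hrep⟩ := ih _ hlt q rfl hq0
      refine ⟨u, m + 1, fun j => if j = 0 then 1 else r (j-1), hu, ?_, ?_⟩
      · intro j hj
        rcases j with _ | j
        · simp
        · simpa using hr j (by omega)
      · rw [Finset.sum_range_succ']
        simp only [Nat.add_sub_cancel, Nat.succ_ne_zero, if_false, if_true, pow_succ, pow_zero]
        rw [hzq, hrep, mul_add, Finset.mul_sum,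
          Finset.sum_congr rfl
            (fun j _ => by ring : ∀ j ∈ Finset.range m, b * (r j * b ^ j) = r j * (b ^ j * b))]
        ring

/-- Every nonzero Gaussian integer has a representation `z = u·(1+i)^m + ∑_{j<m} rⱼ(1+i)ʲ`
with `u` a unit of `ℤ[i]` and digits `rⱼ ∈ {0,1}`. -/
theorem gaussian_base_one_add_I (z : GaussianInt) :
    z = 0 ∨ ∃ (u : GaussianInt) (m : ℕ) (r : ℕ → GaussianInt),
      (u = 1 ∨ u = -1 ∨ u = (⟨0, 1⟩ : GaussianInt) ∨ u = -(⟨0, 1⟩ : GaussianInt)) ∧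
      (∀ j < m, r j = 0 ∨ r j = 1) ∧
      z = u * (⟨1, 1⟩ : GaussianInt) ^ m +
        ∑ j ∈ Finset.range m, r j * (⟨1, 1⟩ : GaussianInt) ^ j := by
  rcases eq_or_ne z 0 with h | h
  · exact Or.inl h
  · exact Or.inr (gauss_rep_aux _ z rfl h)
end

section
/- Let $b_1, b_2 \in \mathbb{Z}[i]$ be nonzero Gaussian integers with $|b_1| > 1$ and $|b_2| > 1$. Then $1$ lies in the closure of the set $P = \{ b_1^{l_1} / b_2^{l_2} : l_1, l_2 \in \mathbb{Z}_{>0} \} \subset \mathbb{C}$; in particular, for every $\varepsilon > 0$ there are positive integers $l_1, l_2$ with $|b_1^{l_1}/b_2^{l_2} - 1| < \varepsilon$. -/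
/-!
Choose `k n` with `‖c₂‖ ^ k n ≤ ‖c₁‖ ^ n < ‖c₂‖ ^ (k n + 1)`. The ratios `v n = c₁ ^ n / c₂ ^ k n`
then lie in the compact annulus `1 ≤ ‖v‖ ≤ ‖c₂‖`, so two of them, `v n` and `v m` with `n < m`,
are as close as we like, and `v m / v n = c₁ ^ (m - n) / c₂ ^ (k m - k n)` is close to `1`.
Closeness to `1` also forces `k n < k m`: otherwise `‖v m / v n‖ ≥ ‖c₁‖`.
-/

open Bornology Metric Set

theorem exists_lt_dist_lt_of_isBounded_range {α : Type*} [PseudoMetricSpace α] [ProperSpace α]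
    {u : ℕ → α} (hu : IsBounded (range u)) {δ : ℝ} (hδ : 0 < δ) :
    ∃ n m, n < m ∧ dist (u m) (u n) < δ := by
  obtain ⟨a, -, φ, hφ, hlim⟩ := tendsto_subseq_of_bounded hu (mem_range_self ·)
  obtain ⟨N, hN⟩ := Metric.tendsto_atTop.mp hlim (δ / 2) (half_pos hδ)
  refine ⟨φ N, φ (N + 1), hφ N.lt_succ_self, ?_⟩
  calc dist (u (φ (N + 1))) (u (φ N))
      ≤ dist (u (φ (N + 1))) a + dist (u (φ N)) a := dist_triangle_right _ _ _
    _ < δ / 2 + δ / 2 := add_lt_add (hN _ N.le_succ) (hN N le_rfl)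
    _ = δ := add_halves δ

section NormedField

variable {𝕜 : Type*} [NormedField 𝕜]

theorem exists_norm_div_pow_mem_Ico {x c : 𝕜} (hx : 1 ≤ ‖x‖) (hc : 1 < ‖c‖) :
    ∃ k : ℕ, ‖x / c ^ k‖ ∈ Ico 1 ‖c‖ := by
  obtain ⟨k, hle, hlt⟩ := exists_nat_pow_near hx hc
  have hck : 0 < ‖c‖ ^ k := pow_pos (one_pos.trans hc) k
  refine ⟨k, ?_, ?_⟩
  · rwa [norm_div, norm_pow, one_le_div hck]
  · rwa [norm_div, norm_pow, div_lt_iff₀ hck, ← pow_succ']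

theorem norm_div_sub_one_le_dist {x y : 𝕜} (hy : 1 ≤ ‖y‖) : ‖x / y - 1‖ ≤ dist x y := by
  have hy₀ : y ≠ 0 := norm_pos_iff.mp (one_pos.trans_le hy)
  rw [div_sub_one hy₀, norm_div, dist_eq_norm]
  exact div_le_self (norm_nonneg _) hy

theorem norm_le_norm_pow_mul_pow {c₁ c₂ : 𝕜} (h₁ : 1 ≤ ‖c₁‖) (h₂ : 1 ≤ ‖c₂‖) {l₁ : ℕ}
    (hl₁ : 0 < l₁) (l₂ : ℕ) : ‖c₁‖ ≤ ‖c₁ ^ l₁ * c₂ ^ l₂‖ := by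
  rw [norm_mul, norm_pow, norm_pow]
  calc ‖c₁‖ = ‖c₁‖ ^ 1 * 1 := by ring
    _ ≤ ‖c₁‖ ^ l₁ * ‖c₂‖ ^ l₂ := by
      gcongr
      exacts [hl₁, one_le_pow₀ h₂]

theorem exists_pow_div_pow_near_one [ProperSpace 𝕜] {c₁ c₂ : 𝕜} (h₁ : 1 < ‖c₁‖)
    (h₂ : 1 < ‖c₂‖) {ε : ℝ} (hε : 0 < ε) : ∃ l₁ l₂ : ℕ, 0 < l₁ ∧ 0 < l₂ ∧ ‖c₁ ^ l₁ / c₂ ^ l₂ - 1‖ < ε := by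
  have hc₁ : c₁ ≠ 0 := norm_pos_iff.mp (one_pos.trans h₁)
  have hc₂ : c₂ ≠ 0 := norm_pos_iff.mp (one_pos.trans h₂)
  choose k hk using fun n : ℕ ↦
    exists_norm_div_pow_mem_Ico (by rw [norm_pow]; exact one_le_pow₀ h₁.le : 1 ≤ ‖c₁ ^ n‖) h₂
  set v : ℕ → 𝕜 := fun n ↦ c₁ ^ n / c₂ ^ k n
  have hv_bdd : IsBounded (range v) :=
    isBounded_iff_forall_norm_le.mpr ⟨‖c₂‖, forall_mem_range.mpr fun n ↦ (hk n).2.le⟩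
  obtain ⟨n, m, hnm, hdist⟩ :=
    exists_lt_dist_lt_of_isBounded_range hv_bdd (lt_min hε (sub_pos.mpr h₁))
  have hclose : ‖v m / v n - 1‖ < min ε (‖c₁‖ - 1) :=
    (norm_div_sub_one_le_dist (hk n).1).trans_lt hdist
  rcases lt_or_ge (k n) (k m) with hk_lt | hk_ge
  · refine ⟨m - n, k m - k n, Nat.sub_pos_of_lt hnm, Nat.sub_pos_of_lt hk_lt, ?_⟩
    have hratio : c₁ ^ (m - n) / c₂ ^ (k m - k n) = v m / v n := by
      simp only [v, pow_sub₀ c₁ hc₁ hnm.le, pow_sub₀ c₂ hc₂ hk_lt.le]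
      field_simp
    exact hratio ▸ hclose.trans_le (min_le_left _ _)
  · have hratio : v m / v n = c₁ ^ (m - n) * c₂ ^ (k n - k m) := by
      simp only [v, pow_sub₀ c₁ hc₁ hnm.le, pow_sub₀ c₂ hc₂ hk_ge]
      field_simp
    have hfar : ‖c₁‖ - 1 ≤ ‖v m / v n - 1‖ :=
      calc ‖c₁‖ - 1 ≤ ‖v m / v n‖ - ‖(1 : 𝕜)‖ := by
            rw [hratio, norm_one]
            linarith [norm_le_norm_pow_mul_pow h₁.le h₂.le (Nat.sub_pos_of_lt hnm) (k n - k m)]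
        _ ≤ ‖v m / v n - 1‖ := norm_sub_norm_le _ _
    exact absurd (hclose.trans_le (min_le_right _ _)) hfar.not_gt

end NormedField

theorem one_mem_closure_ratio_powers_general (b1 b2 : GaussianInt)
    (h1 : 1 < ‖GaussianInt.toComplex b1‖)
    (h2 : 1 < ‖GaussianInt.toComplex b2‖) :
    (1 : ℂ) ∈ closure {w : ℂ | ∃ l1 l2 : ℕ, 0 < l1 ∧ 0 < l2 ∧
      w = (GaussianInt.toComplex b1) ^ l1 / (GaussianInt.toComplex b2) ^ l2} ∧
    ∀ ε : ℝ, 0 < ε → ∃ l1 l2 : ℕ, 0 < l1 ∧ 0 < l2 ∧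
      ‖(GaussianInt.toComplex b1) ^ l1 / (GaussianInt.toComplex b2) ^ l2 - 1‖ < ε := by
  have near_one := fun ε (hε : 0 < ε) ↦ exists_pow_div_pow_near_one h1 h2 hε
  refine ⟨Metric.mem_closure_iff.mpr fun ε hε ↦ ?_, near_one⟩
  obtain ⟨l1, l2, hl1, hl2, hlt⟩ := near_one ε hε
  exact ⟨_, ⟨l1, l2, hl1, hl2, rfl⟩, by rwa [dist_comm, dist_eq_norm]⟩

theorem one_mem_closure_ratio_powers (b1 b2 : GaussianInt) (hb1 : b1 ≠ 0) (hb2 : b2 ≠ 0)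
    (h1 : 1 < ‖GaussianInt.toComplex b1‖)
    (h2 : 1 < ‖GaussianInt.toComplex b2‖) :
    (1 : ℂ) ∈ closure {w : ℂ | ∃ l1 l2 : ℕ, 0 < l1 ∧ 0 < l2 ∧
      w = (GaussianInt.toComplex b1) ^ l1 / (GaussianInt.toComplex b2) ^ l2} ∧
    ∀ ε : ℝ, 0 < ε → ∃ l1 l2 : ℕ, 0 < l1 ∧ 0 < l2 ∧
      ‖(GaussianInt.toComplex b1) ^ l1 / (GaussianInt.toComplex b2) ^ l2 - 1‖ < ε :=
  one_mem_closure_ratio_powers_general b1 b2 h1 h2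
end
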